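/- For m ≥ 3 and i ≥ 3, the number of dominating sets of size i in the lollipop graph L_{m,2} equals C(m+1,i−1) + C(m,i−1). -/

import Mathlib

/-- A finite set of vertices dominates the graph. -/
def Dominates {V : Type*} (G : SimpleGraph V) (U : Finset V) : Prop :=
  ∀ v : V, v ∈ U ∨ ∃ u ∈ U, G.Adj u v

/-- The number of dominating sets of size `i`. -/
noncomputable def domCount {V : Type*} [Fintype V] (G : SimpleGraph V) (i : ℕ) : ℕ :=
  Nat.card {U : Finset V // U.card = i ∧ Dominates G U}

/-- The asymmetric adjacency relation of the lollipop graph `L_{m,n}`: a complete graph on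
`Fin m`, a path on `Fin n`, and an edge joining vertex `0` of the complete graph to
the endpoint `0` of the path. -/
def lollipopRel {m n : ℕ} : (Fin m ⊕ Fin n) → (Fin m ⊕ Fin n) → Prop
  | .inl a, .inl b => a ≠ b
  | .inl a, .inr i => (a : ℕ) = 0 ∧ (i : ℕ) = 0
  | .inr i, .inr j => (i : ℕ) + 1 = (j : ℕ)
  | _, _ => False

/-- The `(m,n)`-lollipop graph. -/
def lollipop (m n : ℕ) : SimpleGraph (Fin m ⊕ Fin n) :=
  SimpleGraph.fromRel lollipopRel

/-! An `i`-set with `i ≥ 3` cannot lie inside the two path vertices, so it contains a clique vertex,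
which dominates the whole clique. Any path vertex in the set dominates the path, while a set inside
the clique misses the far endpoint of the path. Hence the dominating `i`-sets are exactly those not
contained in the clique, and there are `C(m+2, i) - C(m, i) = C(m+1, i-1) + C(m, i-1)` of them. -/

open Finset Sum

theorem domCount_eq_card_filter_of_iff {V : Type*} [Fintype V] [DecidableEq V]
    (G : SimpleGraph V) {i : ℕ} (p : Finset V → Prop) [DecidablePred p]
    (h : ∀ U : Finset V, #U = i → (Dominates G U ↔ p U)) :
    domCount G i = #{U ∈ (univ : Finset V).powersetCard i | p U} := by
  rw [domCount, ← Nat.card_eq_finsetCard]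
  exact Nat.card_congr <| Equiv.subtypeEquivRight fun U => by
    simp only [mem_filter, mem_powersetCard_univ]
    exact ⟨fun ⟨hU, hd⟩ => ⟨hU, (h U hU).1 hd⟩, fun ⟨hU, hp⟩ => ⟨hU, (h U hU).2 hp⟩⟩

theorem exists_inl_mem_of_card_lt {α β : Type*} [Fintype β] {U : Finset (α ⊕ β)}
    (hU : Fintype.card β < #U) :
    ∃ a, inl a ∈ U := by
  by_contra! h
  have hsub : U ⊆ univ.map .inr := fun x hx => by
    cases x with
    | inl a => exact absurd hx (h a)
    | inr b => simp
  have := card_le_card hsub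
  rw [card_map, card_univ] at this
  omega

theorem card_powersetCard_filter_not_subset {α : Type*} [DecidableEq α] {s t : Finset α}
    (hst : s ⊆ t) (i : ℕ) :
    #{U ∈ t.powersetCard i | ¬ U ⊆ s} = (#t).choose i - (#s).choose i := by
  have hsub : {U ∈ t.powersetCard i | U ⊆ s} = s.powersetCard i := by
    ext U
    simp only [mem_filter, mem_powersetCard]
    exact ⟨fun ⟨⟨_, hU⟩, hUs⟩ => ⟨hUs, hU⟩, fun ⟨hUs, hU⟩ => ⟨⟨hUs.trans hst, hU⟩, hUs⟩⟩
  have hsplit := card_filter_add_card_filter_not (s := t.powersetCard i) (· ⊆ s)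
  rw [hsub, card_powersetCard, card_powersetCard] at hsplit
  omega

theorem Nat.choose_add_two_sub_choose (m j : ℕ) :
    (m + 2).choose (j + 1) - m.choose (j + 1) = (m + 1).choose j + m.choose j := by
  rw [Nat.choose_succ_succ' (m + 1), Nat.choose_succ_succ' m]
  omega

theorem lollipop_adj_inl_inl {m n : ℕ} {a b : Fin m} :
    (lollipop m n).Adj (inl a) (inl b) ↔ a ≠ b := by
  simp [lollipop, lollipopRel, ne_comm]

theorem lollipop_adj_inl_inr {m n : ℕ} {a : Fin m} {j : Fin n} :
    (lollipop m n).Adj (inl a) (inr j) ↔ (a : ℕ) = 0 ∧ (j : ℕ) = 0 := by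
  simp [lollipop, lollipopRel]

theorem lollipop_two_adj_inr_inr {m : ℕ} {j k : Fin 2} :
    (lollipop m 2).Adj (inr j) (inr k) ↔ j ≠ k := by
  fin_cases j <;> fin_cases k <;> simp [lollipop, lollipopRel]

theorem dominates_lollipop_two_iff {m : ℕ} {U : Finset (Fin m ⊕ Fin 2)} (hU : 3 ≤ #U) :
    Dominates (lollipop m 2) U ↔ ¬ U ⊆ univ.map .inl := by
  constructor
  · intro hdom hsub
    have hpath (j : Fin 2) (hj : inr j ∈ U) : False := by simpa using hsub hj
    rcases hdom (inr 1) with h1 | ⟨u, hu, hadj⟩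
    · exact hpath 1 h1
    · cases u with
      | inl a => simp [lollipop_adj_inl_inr] at hadj
      | inr j => exact hpath j hu
  · intro hnsub v
    obtain ⟨x, hx, hxl⟩ := not_subset.1 hnsub
    obtain ⟨j, rfl⟩ : ∃ j, x = inr j := by cases x <;> simp_all
    obtain ⟨a, ha⟩ := exists_inl_mem_of_card_lt (U := U) (by rw [Fintype.card_fin]; omega)
    cases v with
    | inl b =>
      by_cases hba : b = a
      · exact .inl (hba ▸ ha)
      · exact .inr ⟨inl a, ha, lollipop_adj_inl_inl.2 (Ne.symm hba)⟩
    | inr k =>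
      by_cases hkj : k = j
      · exact .inl (hkj ▸ hx)
      · exact .inr ⟨inr j, hx, lollipop_two_adj_inr_inr.2 (Ne.symm hkj)⟩

theorem domCount_lollipop_two_general (m i : ℕ) (hi : 3 ≤ i) :
    domCount (lollipop m 2) i = Nat.choose (m + 1) (i - 1) + Nat.choose m (i - 1) := by
  rw [domCount_eq_card_filter_of_iff _ _ fun U hU => dominates_lollipop_two_iff (hU ▸ hi),
    card_powersetCard_filter_not_subset (subset_univ _)]
  obtain ⟨j, rfl⟩ : ∃ j, i = j + 1 := ⟨i - 1, by omega⟩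
  simpa using Nat.choose_add_two_sub_choose m j

theorem domCount_lollipop_two (m i : ℕ) (hm : 3 ≤ m) (hi : 3 ≤ i) :
    domCount (lollipop m 2) i = Nat.choose (m + 1) (i - 1) + Nat.choose m (i - 1) :=
  domCount_lollipop_two_general m i hi
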